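/- Let d_1 and d_2 be two partitions of the same integer N whose transposes are both very even (all parts even) or both very odd (all parts odd). If d_1 ⪯ d_2 in the dominance order on partitions (equivalently d_1^t ⪰ d_2^t as decreasing sequences), and d_1 is obtained from d_2 by a single 'domino move' (moving one domino to a lower-left position in the domino tiling described below), then the decreasing rearrangement of I_±(d_1) is ⪰ the decreasing rearrangement of I_±(d_2). -/

import Mathlib

open Finset

/-- The symplectic segment `I₋(k) = (k/2, k/2 − 1, …, k/2 + 1 − ⌊(k+1)/2⌋)`. -/
noncomputable def IminusL (k : ℕ) : List ℝ := (List.range ((k + 1) / 2)).map fun i => (k : ℝ) / 2 - i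

/-- The orthogonal segment `I₊(k) = (k/2 − 1, k/2 − 2, …, k/2 − ⌊k/2⌋)`. -/
noncomputable def IplusL (k : ℕ) : List ℝ := (List.range (k / 2)).map fun i => (k : ℝ) / 2 - 1 - i

/-- The alternating concatenation of segments along the columns `t = dᵗ`:
`ISeg true t = (I₋(t₁), I₊(t₂), I₋(t₃), …) = I₋(d)` and
`ISeg false t = (I₊(t₁), I₋(t₂), …) = I₊(d)`. -/
noncomputable def ISeg : Bool → List ℕ → List ℝ
  | _, [] => []
  | b, (k :: rest) => (if b then IminusL k else IplusL k) ++ ISeg (!b) rest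

lemma flatMap_pure (l : List ℕ) : (l.flatMap fun a => [((a : ℕ) : ℝ)]) = l.map (fun a : ℕ => (a:ℝ)) := by
  induction l with
  | nil => rfl
  | cons a l ih => simp [List.flatMap_cons, ih]

lemma IminusL_eq (k : ℕ) : IminusL k = (List.range ((k+1)/2)).map (fun i : ℕ => (k:ℝ)/2 - (i:ℝ)) := by
  unfold IminusL
  simp only [List.bind_eq_flatMap, List.pure_def]
  rw [flatMap_pure, List.map_map]
  rfl

lemma IplusL_eq (k : ℕ) : IplusL k = (List.range (k/2)).map (fun i : ℕ => (k:ℝ)/2 - 1 - (i:ℝ)) := by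
  unfold IplusL
  simp only [List.bind_eq_flatMap, List.pure_def]
  rw [flatMap_pure, List.map_map]
  rfl

lemma length_IminusL (k : ℕ) : (IminusL k).length = (k + 1) / 2 := by
  rw [IminusL_eq, List.length_map, List.length_range]

lemma length_IplusL (k : ℕ) : (IplusL k).length = k / 2 := by
  rw [IplusL_eq, List.length_map, List.length_range]

lemma getElem_IminusL (k i : ℕ) (h : i < (IminusL k).length) :
    (IminusL k)[i] = (k : ℝ) / 2 - i := by
  simp only [IminusL_eq] at h ⊢
  rw [List.getElem_map, List.getElem_range]

lemma getElem_IplusL (k i : ℕ) (h : i < (IplusL k).length) :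
    (IplusL k)[i] = (k : ℝ) / 2 - 1 - i := by
  simp only [IplusL_eq] at h ⊢
  rw [List.getElem_map, List.getElem_range]

lemma IminusL_add_two (k : ℕ) : IminusL (k + 2) = ((k : ℝ) / 2 + 1) :: IminusL k := by
  apply List.ext_getElem
  · rw [length_IminusL, List.length_cons, length_IminusL]; omega
  intro i h1 h2
  rw [getElem_IminusL]
  match i with
  | 0 =>
    rw [List.getElem_cons_zero]
    push_cast; ring
  | (n+1) =>
    rw [List.getElem_cons_succ, getElem_IminusL]
    push_cast; ring

lemma IplusL_add_two (k : ℕ) : IplusL (k + 2) = ((k : ℝ) / 2) :: IplusL k := by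
  apply List.ext_getElem
  · rw [length_IplusL, List.length_cons, length_IplusL]; omega
  intro i h1 h2
  rw [getElem_IplusL]
  match i with
  | 0 =>
    rw [List.getElem_cons_zero]
    push_cast; ring
  | (n+1) =>
    rw [List.getElem_cons_succ, getElem_IplusL]
    push_cast; ring

noncomputable def segTop (b : Bool) (k : ℕ) : ℝ := if b then (k : ℝ) / 2 + 1 else (k : ℝ) / 2

def altb : List ℕ → Bool → Bool
  | [], c => c
  | _ :: m, c => altb m (!c)

lemma ISeg_insert (m : List ℕ) : ∀ (c : Bool) (j : ℕ) (s : List ℕ),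
    (ISeg c (m ++ (j + 2) :: s)).Perm (segTop (altb m c) j :: ISeg c (m ++ j :: s)) := by
  induction m with
  | nil =>
    intro c j s
    show ((if c then IminusL (j+2) else IplusL (j+2)) ++ ISeg (!c) s).Perm _
    cases c <;>
      simp [IminusL_add_two, IplusL_add_two, segTop, altb, ISeg]
  | cons k m ih =>
    intro c j s
    show ((if c then IminusL k else IplusL k) ++ ISeg (!c) (m ++ (j+2) :: s)).Perm _
    refine ((List.Perm.append_left _ ((ih (!c) j s))).trans ?_)
    exact List.perm_middle

lemma split2 {α : Type*} (l : List α) (a b : ℕ) (hab : a < b) (hb : b < l.length) :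
    l = l.take a ++ l[a]'(lt_trans hab hb) ::
      (((l.drop (a+1)).take (b - (a+1))) ++ l[b] :: l.drop (b+1)) := by
  conv_lhs => rw [← List.take_append_drop a l, List.drop_eq_getElem_cons (lt_trans hab hb)]
  congr 2
  conv_lhs => rw [← List.take_append_drop (b - (a+1)) (l.drop (a+1))]
  congr 1
  rw [List.drop_drop]
  have : a + 1 + (b - (a+1)) = b := by omega
  rw [this, List.drop_eq_getElem_cons hb]

lemma decomp {L : ℕ} (f g : Fin L → ℕ) (a b : Fin L) (hab : a < b)
    (hfg : ∀ c, c ≠ a → c ≠ b → f c = g c) :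
    ∃ p m s : List ℕ, List.ofFn f = p ++ f a :: (m ++ f b :: s) ∧
      List.ofFn g = p ++ g a :: (m ++ g b :: s) := by
  have hbf : (b : ℕ) < (List.ofFn f).length := by simp
  have hbg : (b : ℕ) < (List.ofFn g).length := by simp
  have hab' : (a : ℕ) < (b : ℕ) := hab
  have hT : (List.ofFn g).take a = (List.ofFn f).take a := by
    apply List.ext_getElem (by simp)
    intro i hi1 hi2
    have hia : i < (a : ℕ) := by simp at hi1; omega
    rw [List.getElem_take, List.getElem_take, List.getElem_ofFn, List.getElem_ofFn]
    refine (hfg _ ?_ ?_).symm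
    · simp only [ne_eq, Fin.ext_iff]; omega
    · simp only [ne_eq, Fin.ext_iff]; omega
  have hM : ((List.ofFn g).drop ((a:ℕ)+1)).take ((b:ℕ) - ((a:ℕ)+1)) =
      ((List.ofFn f).drop ((a:ℕ)+1)).take ((b:ℕ) - ((a:ℕ)+1)) := by
    apply List.ext_getElem (by simp)
    intro i hi1 hi2
    have hia : i < (b:ℕ) - ((a:ℕ)+1) := by simp at hi1; omega
    rw [List.getElem_take, List.getElem_take, List.getElem_drop, List.getElem_drop,
      List.getElem_ofFn, List.getElem_ofFn]
    refine (hfg _ ?_ ?_).symm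
    · simp only [ne_eq, Fin.ext_iff]; omega
    · simp only [ne_eq, Fin.ext_iff]; omega
  have hD : (List.ofFn g).drop ((b:ℕ)+1) = (List.ofFn f).drop ((b:ℕ)+1) := by
    apply List.ext_getElem (by simp)
    intro i hi1 hi2
    rw [List.getElem_drop, List.getElem_drop, List.getElem_ofFn, List.getElem_ofFn]
    refine (hfg _ ?_ ?_).symm
    · simp only [ne_eq, Fin.ext_iff]; omega
    · simp only [ne_eq, Fin.ext_iff]; omega
  refine ⟨(List.ofFn f).take a, ((List.ofFn f).drop ((a:ℕ)+1)).take ((b:ℕ) - ((a:ℕ)+1)),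
      (List.ofFn f).drop ((b:ℕ)+1), ?_, ?_⟩
  · have := split2 (List.ofFn f) a b hab' hbf
    simp only [List.getElem_ofFn, Fin.eta] at this
    exact this
  · have := split2 (List.ofFn g) a b hab' hbg
    simp only [List.getElem_ofFn, Fin.eta] at this
    rw [hT, hM, hD] at this
    exact this

lemma oi_top (a : ℝ) (B : List ℝ) (h : ∀ c ∈ B, a ≥ c) :
    List.orderedInsert (· ≥ ·) a B = a :: B := by
  cases B with
  | nil => rfl
  | cons c B' => simp [List.orderedInsert, h c (by simp)]

lemma key (B : List ℝ) (hB : B.Pairwise (· ≥ ·)) : ∀ (x y : ℝ), x ≤ y → ∀ k,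
    ((List.orderedInsert (· ≥ ·) x B).take k).sum ≤
      ((List.orderedInsert (· ≥ ·) y B).take k).sum := by
  induction B with
  | nil =>
    intro x y hxy k
    cases k with
    | zero => simp
    | succ n => simpa [List.orderedInsert] using hxy
  | cons a B' ih =>
    intro x y hxy k
    obtain ⟨ha, hB'⟩ := List.pairwise_cons.mp hB
    by_cases hx : x ≥ a
    · have hy : y ≥ a := le_trans hx hxy
      simp only [List.orderedInsert, if_pos hx, if_pos hy]
      cases k with
      | zero => simp
      | succ n =>
        simp only [List.take_succ_cons, List.sum_cons]
        linarith
    · by_cases hy : y ≥ a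
      · simp only [List.orderedInsert, if_neg hx, if_pos hy]
        cases k with
        | zero => simp
        | succ n =>
          simp only [List.take_succ_cons, List.sum_cons]
          have h1 : ((List.orderedInsert (· ≥ ·) x B').take n).sum ≤
              ((List.orderedInsert (· ≥ ·) a B').take n).sum :=
            ih hB' x a (le_of_not_ge hx) n
          rw [oi_top a B' ha] at h1
          linarith
      · simp only [List.orderedInsert, if_neg hx, if_neg hy]
        cases k with
        | zero => simp
        | succ n =>
          simp only [List.take_succ_cons, List.sum_cons]
          have := ih hB' x y hxy n
          linarith

lemma sorted_dom (Z : List ℝ) (x y : ℝ) (hxy : x ≤ y) (B1 B2 : List ℝ)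
    (h1 : B1.Perm (y :: Z)) (hB1 : B1.Pairwise (· ≥ ·))
    (h2 : B2.Perm (x :: Z)) (hB2 : B2.Pairwise (· ≥ ·)) :
    ∀ k, (B2.take k).sum ≤ (B1.take k).sum := by
  set Zs := Z.insertionSort (· ≥ ·) with hZs
  have hZsort : Zs.Pairwise (· ≥ ·) := List.pairwise_insertionSort _ _
  have hZperm : Zs.Perm Z := List.perm_insertionSort _ _
  have e1 : B1 = List.orderedInsert (· ≥ ·) y Zs := by
    apply List.Perm.eq_of_pairwise' hB1 (List.Pairwise.orderedInsert _ _ hZsort)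
    exact h1.trans ((hZperm.symm.cons y).trans (List.perm_orderedInsert _ _ _).symm)
  have e2 : B2 = List.orderedInsert (· ≥ ·) x Zs := by
    apply List.Perm.eq_of_pairwise' hB2 (List.Pairwise.orderedInsert _ _ hZsort)
    exact h2.trans ((hZperm.symm.cons x).trans (List.perm_orderedInsert _ _ _).symm)
  intro k
  rw [e1, e2]
  exact key Zs hZsort x y hxy k


/-- Reversal phenomenon for a single domino move.  Let `t1 = d₁ᵗ`, `t2 = d₂ᵗ`
be the (weakly decreasing) transposes of two partitions of the same integer,
both very even or both very odd.  If `d₁ ⪯ d₂` in dominance order (i.e.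
`t1 ⪰ t2` as partial sums) and `t1` is obtained from `t2` by a single domino
move (decreasing one entry of `d₂ᵗ` and increasing a later one by `δ ∈ {1,2}`),
then the decreasing rearrangement of `I₊/₋(d₁)` dominates that of
`I₊/₋(d₂)` in all partial sums. -/
theorem stmt16 (L : ℕ) (t1 t2 : Fin L → ℕ)
    (ha1 : Antitone t1) (ha2 : Antitone t2)
    (hpar : ((∀ i, Even (t1 i)) ∧ (∀ i, Even (t2 i))) ∨
            ((∀ i, Odd (t1 i)) ∧ (∀ i, Odd (t2 i))))
    (hsum : ∑ i, t1 i = ∑ i, t2 i)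
    (hdom : ∀ k : Fin L, ∑ i ∈ Finset.univ.filter (· ≤ k), t2 i
        ≤ ∑ i ∈ Finset.univ.filter (· ≤ k), t1 i)
    (hmove : ∃ a b : Fin L, a < b ∧ ∃ δ : ℕ, (δ = 1 ∨ δ = 2) ∧
        t1 a = t2 a + δ ∧ t2 b = t1 b + δ ∧ ∀ c, c ≠ a → c ≠ b → t1 c = t2 c)
    (sgn : Bool) (B1 B2 : List ℝ)
    (h1 : (ISeg sgn (List.ofFn t1)).Perm B1) (hB1 : B1.Pairwise (· ≥ ·))
    (h2 : (ISeg sgn (List.ofFn t2)).Perm B2) (hB2 : B2.Pairwise (· ≥ ·)) :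
    ∀ k, (B2.take k).sum ≤ (B1.take k).sum := by
  obtain ⟨a, b, hab, δ, hδ, h1a, h2b, hcc⟩ := hmove
  have hδ2 : δ = 2 := by
    rcases hδ with h | h
    · exfalso
      subst h
      rcases hpar with ⟨he1, he2⟩ | ⟨ho1, ho2⟩
      · have e1 := (Nat.even_iff).mp (he1 a)
        have e2 := (Nat.even_iff).mp (he2 a)
        omega
      · have e1 := (Nat.odd_iff).mp (ho1 a)
        have e2 := (Nat.odd_iff).mp (ho2 a)
        omega
    · exact h
  subst hδ2
  obtain ⟨p, m, s, hf, hg⟩ := decomp t1 t2 a b hab hcc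
  rw [h1a] at hf
  rw [h2b] at hg
  set k := t2 a
  set j := t1 b
  set Z : List ℝ := ISeg sgn (p ++ k :: (m ++ j :: s)) with hZdef
  have P1 : (ISeg sgn (List.ofFn t1)).Perm (segTop (altb p sgn) k :: Z) := by
    rw [hf]
    exact ISeg_insert p sgn k (m ++ j :: s)
  have P2 : (ISeg sgn (List.ofFn t2)).Perm (segTop (altb (p ++ k :: m) sgn) j :: Z) := by
    rw [hg]
    have := ISeg_insert (p ++ k :: m) sgn j s
    simpa using this
  have hk : j + 2 ≤ k := by
    have : t2 b ≤ t2 a := ha2 (le_of_lt hab)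
    omega
  have hxy : segTop (altb (p ++ k :: m) sgn) j ≤ segTop (altb p sgn) k := by
    have hk' : (j : ℝ) + 2 ≤ (k : ℝ) := by exact_mod_cast hk
    cases altb (p ++ k :: m) sgn <;> cases altb p sgn <;> simp [segTop] <;> linarith
  exact sorted_dom Z _ _ hxy B1 B2 (h1.symm.trans P1) hB1 (h2.symm.trans P2) hB2
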